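/- If a closed sHML formula φ makes a (possibly silent) transition to φ', the actor system A weakly performs the same action to become A', and A' violates φ' with trace t, then A violates φ with trace μt, where μt denotes t prefixed by the action when it is visible (and t itself for τ). -/

import Mathlib

namespace RA

/-! ### Generic weak transitions over a labelled transition system -/

section Weak

variable {A : Type} {Act : Type}

/-- Reflexive-transitive closure of silent steps. -/
def TauStar (R : A → Option Act → A → Prop) : A → A → Prop :=
  Relation.ReflTransGen (fun a b => R a none b)

/-- Weak transition: for a visible action interleave τ-steps; for τ, τ-star. -/
def WeakTr (R : A → Option Act → A → Prop) (a : A) (μ : Option Act) (b : A) : Prop :=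
  match μ with
  | none => TauStar R a b
  | some α => ∃ x y, TauStar R a x ∧ R x (some α) y ∧ TauStar R y b

/-- Weak trace over a list of visible actions. -/
inductive WTrace (R : A → Option Act → A → Prop) : A → List Act → A → Prop
  | nil (a : A) : WTrace R a [] a
  | cons {a b c : A} {α : Act} {t : List Act} :
      WeakTr R a (some α) b → WTrace R b t c → WTrace R a (α :: t) c

/-- Prefix a trace with an optional (possibly silent) action. -/
def consOpt (μ : Option Act) (t : List Act) : List Act :=
  match μ with
  | none => t
  | some α => α :: t

end Weak

/-! ### Value types of the adaptation type system -/

inductive Ty where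
  | dat | upid | lpid | lpidb
  deriving DecidableEq

/-- A signature supplying the abstract data of the framework: patterns, actions,
boolean expressions, term substitutions, process identifiers/variables and
formula variables, together with the operations on them. -/
structure Sig where
  Pat : Type
  Act : Type
  BExp : Type
  Sub : Type
  Id : Type
  FVar : Type
  deqId : DecidableEq Id
  deqFVar : DecidableEq FVar
  /-- matching a pattern against a visible action -/
  mtch : Pat → Act → Option Sub
  /-- matching a pattern against a pattern -/
  mtchPat : Pat → Pat → Option Sub
  /-- decidable evaluation of boolean expressions -/
  beval : BExp → Bool
  /-- subject of a pattern -/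
  subjP : Pat → Id
  /-- subject of an action -/
  subjA : Act → Id
  /-- identifiers occurring in an action -/
  ids : Act → List Id
  /-- process-typed (upid/lpid) binders of an (annotated) pattern -/
  bnd : Pat → List (Id × Ty)
  /-- applying a substitution to a pattern -/
  subPat : Sub → Pat → Pat
  /-- applying a substitution to a boolean expression -/
  subB : Sub → BExp → BExp
  /-- applying a substitution to an identifier/variable -/
  subId : Sub → Id → Id

instance (S : Sig) : DecidableEq S.Id := S.deqId
instance (S : Sig) : DecidableEq S.FVar := S.deqFVar

/-! ### sHML formulas and their semantics -/

inductive HML (S : Sig) where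
  | tt | ff
  | conj (φ ψ : HML S)
  | nec (p : S.Pat) (φ : HML S)
  | fvar (X : S.FVar)
  | max (X : S.FVar) (φ : HML S)
  | cond (b : S.BExp) (φ ψ : HML S)

/-- Substitution of a formula for a formula variable in an sHML formula. -/
def hsubF (S : Sig) (χ : HML S) (X : S.FVar) : HML S → HML S
  | .tt => .tt
  | .ff => .ff
  | .conj φ ψ => .conj (hsubF S χ X φ) (hsubF S χ X ψ)
  | .nec p φ => .nec p (hsubF S χ X φ)
  | .fvar Y => if Y = X then χ else .fvar Y
  | .max Y φ => if Y = X then .max Y φ else .max Y (hsubF S χ X φ)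
  | .cond b φ ψ => .cond b (hsubF S χ X φ) (hsubF S χ X ψ)

/-- Applying a term substitution to an sHML formula. -/
def hsubA (S : Sig) (σ : S.Sub) : HML S → HML S
  | .tt => .tt
  | .ff => .ff
  | .conj φ ψ => .conj (hsubA S σ φ) (hsubA S σ ψ)
  | .nec p φ => .nec (S.subPat σ p) (hsubA S σ φ)
  | .fvar Y => .fvar Y
  | .max Y φ => .max Y (hsubA S σ φ)
  | .cond b φ ψ => .cond (S.subB σ b) (hsubA S σ φ) (hsubA S σ ψ)

/-- Free formula variables of an sHML formula. -/
def hfv (S : Sig) : HML S → Finset S.FVar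
  | .tt => ∅
  | .ff => ∅
  | .conj φ ψ => hfv S φ ∪ hfv S ψ
  | .nec _ φ => hfv S φ
  | .fvar X => {X}
  | .max X φ => hfv S φ \ {X}
  | .cond _ φ ψ => hfv S φ ∪ hfv S ψ

/-- Structural equivalence of sHML formulas. -/
inductive HEquiv (S : Sig) : HML S → HML S → Prop
  | refl (φ : HML S) : HEquiv S φ φ
  | symm {φ ψ : HML S} : HEquiv S φ ψ → HEquiv S ψ φ
  | trans {φ ψ χ : HML S} : HEquiv S φ ψ → HEquiv S ψ χ → HEquiv S φ χ
  | comm (φ ψ : HML S) : HEquiv S (.conj φ ψ) (.conj ψ φ)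
  | assoc (φ ψ χ : HML S) : HEquiv S (.conj φ (.conj ψ χ)) (.conj (.conj φ ψ) χ)
  | unit (φ : HML S) : HEquiv S (.conj .tt φ) φ
  | absorb (φ : HML S) : HEquiv S (.conj .ff φ) .ff
  | congc {φ φ' ψ ψ' : HML S} :
      HEquiv S φ φ' → HEquiv S ψ ψ' → HEquiv S (.conj φ ψ) (.conj φ' ψ')

/-- The LTS semantics of sHML formulas; labels are `Option S.Act` (`none` = τ). -/
inductive HStep (S : Sig) : HML S → Option S.Act → HML S → Prop
  | idem1 (α : S.Act) : HStep S .ff (some α) .ff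
  | idem2 (α : S.Act) : HStep S .tt (some α) .tt
  | ifT {b : S.BExp} {φ ψ : HML S} : S.beval b = true → HStep S (.cond b φ ψ) none φ
  | ifF {b : S.BExp} {φ ψ : HML S} : S.beval b = false → HStep S (.cond b φ ψ) none ψ
  | unfold (X : S.FVar) (φ : HML S) :
      HStep S (.max X φ) none (hsubF S (.max X φ) X φ)
  | nc1 {p : S.Pat} {α : S.Act} {σ : S.Sub} {φ : HML S} :
      S.mtch p α = some σ → HStep S (.nec p φ) (some α) (hsubA S σ φ)
  | nc2 {p : S.Pat} {α : S.Act} {φ : HML S} :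
      S.mtch p α = none → HStep S (.nec p φ) (some α) .tt
  | cn1 {φ φ' ψ ψ' : HML S} {α : S.Act} :
      HStep S φ (some α) φ' → HStep S ψ (some α) ψ' →
      HStep S (.conj φ ψ) (some α) (.conj φ' ψ')
  | cn2 {φ φ' ψ : HML S} : HStep S φ none φ' → HStep S (.conj φ ψ) none (.conj φ' ψ)
  | cn3 {φ ψ ψ' : HML S} : HStep S ψ none ψ' → HStep S (.conj φ ψ) none (.conj φ ψ')
  | str {φ φ₀ ψ₀ ψ : HML S} {μ : Option S.Act} :
      HEquiv S φ φ₀ → HStep S φ₀ μ ψ₀ → HEquiv S ψ₀ ψ → HStep S φ μ ψ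

/-- The violation relation `A , t ⊩v φ` for an actor system given by the
labelled relation `R` (with `none` as the silent action). -/
inductive Viol (S : Sig) {A : Type} (R : A → Option S.Act → A → Prop) :
    A → List S.Act → HML S → Prop
  | ff (a : A) (t : List S.Act) : Viol S R a t .ff
  | ifT {a : A} {t : List S.Act} {b : S.BExp} {φ ψ : HML S} :
      S.beval b = true → Viol S R a t φ → Viol S R a t (.cond b φ ψ)
  | ifF {a : A} {t : List S.Act} {b : S.BExp} {φ ψ : HML S} :
      S.beval b = false → Viol S R a t ψ → Viol S R a t (.cond b φ ψ)
  | cnL {a : A} {t : List S.Act} {φ ψ : HML S} :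
      Viol S R a t φ → Viol S R a t (.conj φ ψ)
  | cnR {a : A} {t : List S.Act} {φ ψ : HML S} :
      Viol S R a t ψ → Viol S R a t (.conj φ ψ)
  | nec {a a' : A} {t : List S.Act} {α : S.Act} {p : S.Pat} {σ : S.Sub} {φ : HML S} :
      WeakTr R a (some α) a' → S.mtch p α = some σ →
      Viol S R a' t (hsubA S σ φ) → Viol S R a (α :: t) (.nec p φ)
  | unfold {a : A} {t : List S.Act} {X : S.FVar} {φ : HML S} :
      Viol S R a t (hsubF S (.max X φ) X φ) → Viol S R a t (.max X φ)

/-! ### Adaptation-script formulas -/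

inductive AFrm (S : Sig) where
  | tt | ff
  | conj (φ ψ : AFrm S)
  /-- necessity `[p]^ρ_L φ`, with blocking modality `ρ` (`true` = blocking),
  a scope decoration `stk` and a release list `L` -/
  | nec (blocking : Bool) (p : S.Pat) (stk : Finset S.FVar) (L : List S.Id) (φ : AFrm S)
  | fvar (X : S.FVar)
  | max (X : S.FVar) (φ : AFrm S)
  | cond (b : S.BExp) (φ ψ : AFrm S)
  /-- synchronous adaptation with adaptation list and release list -/
  | adS (Al Rl : List S.Id) (φ : AFrm S)
  /-- asynchronous adaptation with adaptation list and release list -/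
  | adA (Al Rl : List S.Id) (φ : AFrm S)
  | blk (L : List S.Id) (φ : AFrm S)
  | rel (L : List S.Id) (φ : AFrm S)
  | clr (X : S.FVar) (φ : AFrm S)

/-- Substitution of a formula for a formula variable in an adaptation script. -/
def subF (S : Sig) (χ : AFrm S) (X : S.FVar) : AFrm S → AFrm S
  | .tt => .tt
  | .ff => .ff
  | .conj φ ψ => .conj (subF S χ X φ) (subF S χ X ψ)
  | .nec b p stk L φ => .nec b p stk L (subF S χ X φ)
  | .fvar Y => if Y = X then χ else .fvar Y
  | .max Y φ => if Y = X then .max Y φ else .max Y (subF S χ X φ)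
  | .cond c φ ψ => .cond c (subF S χ X φ) (subF S χ X ψ)
  | .adS Al Rl φ => .adS Al Rl (subF S χ X φ)
  | .adA Al Rl φ => .adA Al Rl (subF S χ X φ)
  | .blk L φ => .blk L (subF S χ X φ)
  | .rel L φ => .rel L (subF S χ X φ)
  | .clr Y φ => if Y = X then .clr Y φ else .clr Y (subF S χ X φ)

/-- Applying a term substitution to an adaptation script. -/
def subA (S : Sig) (σ : S.Sub) : AFrm S → AFrm S
  | .tt => .tt
  | .ff => .ff
  | .conj φ ψ => .conj (subA S σ φ) (subA S σ ψ)
  | .nec b p stk L φ => .nec b (S.subPat σ p) stk (L.map (S.subId σ)) (subA S σ φ)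
  | .fvar Y => .fvar Y
  | .max Y φ => .max Y (subA S σ φ)
  | .cond c φ ψ => .cond (S.subB σ c) (subA S σ φ) (subA S σ ψ)
  | .adS Al Rl φ => .adS (Al.map (S.subId σ)) (Rl.map (S.subId σ)) (subA S σ φ)
  | .adA Al Rl φ => .adA (Al.map (S.subId σ)) (Rl.map (S.subId σ)) (subA S σ φ)
  | .blk L φ => .blk (L.map (S.subId σ)) (subA S σ φ)
  | .rel L φ => .rel (L.map (S.subId σ)) (subA S σ φ)
  | .clr Y φ => .clr Y (subA S σ φ)

/-- Free formula variables of an adaptation script. -/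
def fvF (S : Sig) : AFrm S → Finset S.FVar
  | .tt => ∅
  | .ff => ∅
  | .conj φ ψ => fvF S φ ∪ fvF S ψ
  | .nec _ _ _ _ φ => fvF S φ
  | .fvar X => {X}
  | .max X φ => fvF S φ \ {X}
  | .cond _ φ ψ => fvF S φ ∪ fvF S ψ
  | .adS _ _ φ => fvF S φ
  | .adA _ _ φ => fvF S φ
  | .blk _ φ => fvF S φ
  | .rel _ φ => fvF S φ
  | .clr X φ => fvF S φ \ {X}

/-- Structural equivalence of adaptation scripts. -/
inductive AEquiv (S : Sig) : AFrm S → AFrm S → Prop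
  | refl (φ : AFrm S) : AEquiv S φ φ
  | symm {φ ψ : AFrm S} : AEquiv S φ ψ → AEquiv S ψ φ
  | trans {φ ψ χ : AFrm S} : AEquiv S φ ψ → AEquiv S ψ χ → AEquiv S φ χ
  | comm (φ ψ : AFrm S) : AEquiv S (.conj φ ψ) (.conj ψ φ)
  | assoc (φ ψ χ : AFrm S) : AEquiv S (.conj φ (.conj ψ χ)) (.conj (.conj φ ψ) χ)
  | unit (φ : AFrm S) : AEquiv S (.conj .tt φ) φ
  | absorb (φ : AFrm S) : AEquiv S (.conj .ff φ) .ff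
  | congc {φ φ' ψ ψ' : AFrm S} :
      AEquiv S φ φ' → AEquiv S ψ ψ' → AEquiv S (.conj φ ψ) (.conj φ' ψ')

/-! ### Environments -/

/-- Value type environments. -/
abbrev Env (S : Sig) := S.Id → Option Ty

/-- Formula environments. -/
abbrev FEnv (S : Sig) := S.FVar → Option (Env S)

/-- Scoping environments `U` tracking linear identifiers in use. -/
abbrev UEnv (S : Sig) := S.Id → Option (Finset S.FVar)

/-- Abstract systems: partial maps recording whether an actor is blocked
(`some true`) or unblocked (`some false`). -/
abbrev Sys (S : Sig) := S.Id → Option Bool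

/-- Dynamically-typed monitor configurations `⟨Γ, U, φ⟩`. -/
abbrev Conf (S : Sig) := Env S × UEnv S × AFrm S

/-- Lookup in an association list of typed identifiers. -/
def lkp (S : Sig) (l : List (S.Id × Ty)) (x : S.Id) : Option Ty :=
  (l.find? (fun q => decide (q.1 = x))).map Prod.snd

/-- Environment extension `(Γ, l)` by an association list. -/
def extL (S : Sig) (Γ : Env S) (l : List (S.Id × Ty)) : Env S :=
  fun x => match lkp S l x with
    | some t => some t
    | none => Γ x

/-- Retype all identifiers in `L` to `t`. -/
def updL (S : Sig) (Γ : Env S) (L : List S.Id) (t : Ty) : Env S :=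
  fun x => if x ∈ L then some t else Γ x

/-- Environment inclusion. -/
def EnvLe (S : Sig) (Γ Γ' : Env S) : Prop :=
  ∀ x t, Γ x = some t → Γ' x = some t

/-- Join of two environments (the extension `(Γ, Γ')`). -/
def envJoin (S : Sig) (Γ Γ' : Env S) : Env S :=
  fun x => match Γ x with
    | some t => some t
    | none => Γ' x

/-- Environment splitting `Γ = Γ₁ + Γ₂`: unrestricted entries are duplicated,
linear entries go to exactly one side. -/
def Split (S : Sig) (Γ Γ₁ Γ₂ : Env S) : Prop :=
  (∀ x, Γ x = none → Γ₁ x = none ∧ Γ₂ x = none) ∧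
  (∀ x t, Γ x = some t →
    ((t = Ty.dat ∨ t = Ty.upid) → Γ₁ x = some t ∧ Γ₂ x = some t) ∧
    ((t = Ty.lpid ∨ t = Ty.lpidb) →
      (Γ₁ x = some t ∧ Γ₂ x = none) ∨ (Γ₂ x = some t ∧ Γ₁ x = none)))

/-- The side-effect function `eff(Γ,L)`: retypes identifiers in `L` from
`lpidb` to `lpid`, leaving everything else unchanged. -/
def eff (S : Sig) (Γ : Env S) (L : List S.Id) : Env S :=
  fun x => match Γ x with
    | some Ty.lpidb => if x ∈ L then some Ty.lpid else some Ty.lpidb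
    | o => o

/-- Update of a formula environment. -/
def updF (S : Sig) (Δ : FEnv S) (X : S.FVar) (Γ : Env S) : FEnv S :=
  fun Y => if Y = X then some Γ else Δ Y

/-- Remove from `U` every entry scoped under the formula variable `X`. -/
def Udel (S : Sig) (U : UEnv S) (X : S.FVar) : UEnv S :=
  fun i => match U i with
    | some stk => if X ∈ stk then none else some stk
    | none => none

/-- Extend `U` with the linearly-typed identifiers of `l`, scoped under `stk`. -/
def Uadd (S : Sig) (U : UEnv S) (l : List (S.Id × Ty)) (stk : Finset S.FVar) : UEnv S :=
  fun i => if lkp S l i = some Ty.lpid then some stk else U i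

/-- Union of two scoping environments. -/
def Ujoin (S : Sig) (U U' : UEnv S) : UEnv S :=
  fun i => match U i, U' i with
    | some a, some b => some (a ∪ b)
    | some a, none => some a
    | none, o => o

/-- The process bindings of pattern `p` instantiated by substitution `σ`. -/
def bndS (S : Sig) (σ : S.Sub) (p : S.Pat) : List (S.Id × Ty) :=
  (S.bnd p).map (fun q => (S.subId σ q.1, q.2))

/-- The extension `(Γ, l)` remains a valid map (no type mismatch). -/
def MapExtOK (S : Sig) (Γ : Env S) (l : List (S.Id × Ty)) : Prop :=
  (∀ q ∈ l, ∀ r ∈ l, q.1 = r.1 → q.2 = r.2) ∧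
  (∀ q ∈ l, ∀ t, Γ q.1 = some t → q.2 = t)

/-! ### Mutual exclusion -/

/-- `φ` is a collection of trivially satisfied branches `rel(L₁).tt ∧ … ∧ rel(Lₙ).tt`. -/
def trivSat (S : Sig) : AFrm S → Bool
  | .rel _ .tt => true
  | .conj φ ψ => trivSat S φ && trivSat S ψ
  | _ => false

/-- The top guarding patterns of a branch (`none` stands for the universally
matching pattern of an unguarded branch). -/
def fps (S : Sig) : AFrm S → List (Option S.Pat)
  | .nec _ p _ _ _ => [some p]
  | .cond _ φ ψ => fps S φ ++ fps S ψ
  | .conj φ ψ => fps S φ ++ fps S ψ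
  | .max _ φ => fps S φ
  | .clr _ φ => fps S φ
  | _ => [none]

/-- `vexcl φ ψ`: if `φ` is mutually exclusive to `ψ`, the release set of `φ`. -/
def vexcl (S : Sig) : AFrm S → AFrm S → Option (List S.Id)
  | .conj φ₁ φ₂, ψ =>
      match vexcl S φ₁ ψ, vexcl S φ₂ ψ with
      | some a, some b => some (a ++ b)
      | _, _ => none
  | .nec _ p _ L _, ψ =>
      if trivSat S ψ then some []
      else if (fps S ψ).all (fun q =>
          match q with
          | some q' => (S.mtchPat p q').isNone
          | none => false)
      then some L
      else none
  | .cond _ φ₁ φ₂, ψ =>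
      if trivSat S ψ then some []
      else
        match vexcl S φ₁ ψ, vexcl S φ₂ ψ with
        | some a, some b => if a = b then some a else none
        | _, _ => none
  | .max _ φ, ψ => if trivSat S ψ then some [] else vexcl S φ ψ
  | .clr _ φ, ψ => if trivSat S ψ then some [] else vexcl S φ ψ
  | .rel L .tt, _ => some L
  | _, ψ => if trivSat S ψ then some [] else none

/-- The mutual-exclusion function `excl`, returning the pair of release sets. -/
def excl (S : Sig) (φ ψ : AFrm S) : Option (List S.Id × List S.Id) :=
  match vexcl S φ ψ, vexcl S ψ φ with
  | some a, some b => some (a, b)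
  | _, _ => none

/-! ### Labels -/

inductive MLab (S : Sig) where
  | act (α : S.Act)
  | tau
  | adS (L : List S.Id)
  | adA (L : List S.Id)
  | blk (L : List S.Id)
  | rel (L : List S.Id)

/-- Adaptation/synchronisation labels `κ`. -/
def isK (S : Sig) : MLab S → Prop
  | .adS _ => True
  | .adA _ => True
  | .blk _ => True
  | .rel _ => True
  | .act _ => False
  | .tau => False

/-! ### Dynamically-typed monitor transitions -/

inductive MStep (S : Sig) : Conf S → MLab S → Conf S → Prop
  | idem1 (Γ : Env S) (U : UEnv S) (α : S.Act) :
      MStep S (Γ, U, AFrm.tt) (MLab.act α) (Γ, U, AFrm.tt)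
  | idem2 (Γ : Env S) (U : UEnv S) (α : S.Act) :
      MStep S (Γ, U, AFrm.ff) (MLab.act α) (Γ, U, AFrm.ff)
  | unfold (Γ : Env S) (U : UEnv S) (X : S.FVar) (φ : AFrm S) :
      MStep S (Γ, U, AFrm.max X φ) MLab.tau
        (Γ, U, subF S (AFrm.clr X (AFrm.max X φ)) X φ)
  | clear (Γ : Env S) (U : UEnv S) (X : S.FVar) (φ : AFrm S) :
      MStep S (Γ, U, AFrm.clr X φ) MLab.tau (Γ, Udel S U X, φ)
  | nc1 {Γ : Env S} {U : UEnv S} {p : S.Pat} {α : S.Act} {σ : S.Sub}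
      {stk : Finset S.FVar} {L : List S.Id} {φ : AFrm S} :
      S.mtch p α = some σ →
      MapExtOK S Γ (bndS S σ p) →
      (∀ x : S.Id, (U x).isSome = true → lkp S (bndS S σ p) x = none) →
      (∀ x y : S.Id, (x, Ty.lpid) ∈ S.bnd p → (y, Ty.lpid) ∈ S.bnd p → x ≠ y →
          S.subId σ x ≠ S.subId σ y) →
      MStep S (Γ, U, AFrm.nec true p stk L φ) (MLab.act α)
        (extL S Γ (bndS S σ p), Uadd S U (bndS S σ p) stk,
          AFrm.blk [S.subjA α] (subA S σ φ))
  | nc2 {Γ : Env S} {U : UEnv S} {p : S.Pat} {α : S.Act} {σ : S.Sub}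
      {stk : Finset S.FVar} {L : List S.Id} {φ : AFrm S} :
      S.mtch p α = some σ →
      MapExtOK S Γ (bndS S σ p) →
      (∀ x : S.Id, (U x).isSome = true → lkp S (bndS S σ p) x = none) →
      (∀ x y : S.Id, (x, Ty.lpid) ∈ S.bnd p → (y, Ty.lpid) ∈ S.bnd p → x ≠ y →
          S.subId σ x ≠ S.subId σ y) →
      MStep S (Γ, U, AFrm.nec false p stk L φ) (MLab.act α)
        (extL S Γ (bndS S σ p), Uadd S U (bndS S σ p) stk, subA S σ φ)
  | nc3 {Γ : Env S} {U : UEnv S} {ρ : Bool} {p : S.Pat} {α : S.Act}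
      {stk : Finset S.FVar} {L : List S.Id} {φ : AFrm S} :
      S.mtch p α = none →
      MStep S (Γ, U, AFrm.nec ρ p stk L φ) (MLab.act α) (Γ, U, AFrm.rel L AFrm.tt)
  | ifT {Γ : Env S} {U : UEnv S} {b : S.BExp} {φ ψ : AFrm S} :
      S.beval b = true → MStep S (Γ, U, AFrm.cond b φ ψ) MLab.tau (Γ, U, φ)
  | ifF {Γ : Env S} {U : UEnv S} {b : S.BExp} {φ ψ : AFrm S} :
      S.beval b = false → MStep S (Γ, U, AFrm.cond b φ ψ) MLab.tau (Γ, U, ψ)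
  | cn1 {Γ Γ₁ Γ₂ : Env S} {U U₁ U₂ : UEnv S} {φ φ' ψ ψ' : AFrm S} {α : S.Act} :
      MStep S (Γ, U, φ) (MLab.act α) (Γ₁, U₁, φ') →
      MStep S (Γ, U, ψ) (MLab.act α) (Γ₂, U₂, ψ') →
      (∀ i : S.Id, (U i).isSome = true ↔ ((U₁ i).isSome = true ∧ (U₂ i).isSome = true)) →
      MStep S (Γ, U, AFrm.conj φ ψ) (MLab.act α)
        (envJoin S Γ₁ Γ₂, Ujoin S U₁ U₂, AFrm.conj φ' ψ')
  | cn2l {Γ : Env S} {U U' : UEnv S} {φ φ' ψ : AFrm S} :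
      MStep S (Γ, U, φ) MLab.tau (Γ, U', φ') →
      MStep S (Γ, U, AFrm.conj φ ψ) MLab.tau (Γ, U', AFrm.conj φ' ψ)
  | cn2r {Γ : Env S} {U U' : UEnv S} {φ ψ ψ' : AFrm S} :
      MStep S (Γ, U, ψ) MLab.tau (Γ, U', ψ') →
      MStep S (Γ, U, AFrm.conj φ ψ) MLab.tau (Γ, U', AFrm.conj φ ψ')
  | cn3l {Γ Γ' : Env S} {U : UEnv S} {φ φ' ψ : AFrm S} {κ : MLab S} :
      isK S κ → MStep S (Γ, U, φ) κ (Γ', U, φ') →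
      MStep S (Γ, U, AFrm.conj φ ψ) κ (Γ', U, AFrm.conj φ' ψ)
  | cn3r {Γ Γ' : Env S} {U : UEnv S} {φ ψ ψ' : AFrm S} {κ : MLab S} :
      isK S κ → MStep S (Γ, U, ψ) κ (Γ', U, ψ') →
      MStep S (Γ, U, AFrm.conj φ ψ) κ (Γ', U, AFrm.conj φ ψ')
  | adAs (Γ : Env S) (U : UEnv S) (Al Rl : List S.Id) (φ : AFrm S) :
      MStep S (Γ, U, AFrm.adA Al Rl φ) (MLab.adA Al) (Γ, U, AFrm.rel Rl φ)
  | adSs (Γ : Env S) (U : UEnv S) (Al Rl : List S.Id) (φ : AFrm S) :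
      MStep S (Γ, U, AFrm.adS Al Rl φ) (MLab.adS Al) (Γ, U, AFrm.rel Rl φ)
  | rels {Γ : Env S} {U : UEnv S} {L : List S.Id} {φ : AFrm S} :
      (∀ i ∈ L, Γ i = some Ty.lpidb) →
      MStep S (Γ, U, AFrm.rel L φ) (MLab.rel L) (updL S Γ L Ty.lpid, U, φ)
  | blks {Γ : Env S} {U : UEnv S} {L : List S.Id} {φ : AFrm S} :
      (∀ i ∈ L, Γ i = some Ty.lpid) →
      MStep S (Γ, U, AFrm.blk L φ) (MLab.blk L) (updL S Γ L Ty.lpidb, U, φ)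
  | str {Γ Γ' : Env S} {U U' : UEnv S} {φ φ₀ ψ₀ ψ : AFrm S} {μ : MLab S} :
      AEquiv S φ φ₀ → MStep S (Γ, U, φ₀) μ (Γ', U', ψ₀) → AEquiv S ψ₀ ψ →
      MStep S (Γ, U, φ) μ (Γ', U', ψ)

/-! ### System transitions -/

inductive SysStep (S : Sig) : Sys S → MLab S → Sys S → Prop
  | new {s : Sys S} {i : S.Id} : s i = none →
      SysStep S s MLab.tau (fun x => if x = i then some false else s x)
  | act {s : Sys S} {α : S.Act} : s (S.subjA α) = some false →
      (∀ i ∈ S.ids α, (s i).isSome = true) → SysStep S s (MLab.act α) s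
  | blk {s : Sys S} {L : List S.Id} : (∀ i ∈ L, s i = some false) →
      SysStep S s (MLab.blk L) (fun x => if x ∈ L then some true else s x)
  | rel {s : Sys S} {L : List S.Id} : (∀ i ∈ L, s i = some true) →
      SysStep S s (MLab.rel L) (fun x => if x ∈ L then some false else s x)
  | adA {s : Sys S} {L : List S.Id} : (∀ i ∈ L, (s i).isSome = true) →
      SysStep S s (MLab.adA L) s
  | adS {s : Sys S} {L : List S.Id} : (∀ i ∈ L, s i = some true) →
      SysStep S s (MLab.adS L) s

/-! ### Instrumentation transitions -/

/-- The monitor configuration can perform some adaptation/synchronisation action. -/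
def canK (S : Sig) (c : Conf S) : Prop :=
  ∃ κ c', isK S κ ∧ MStep S c κ c'

inductive IStep (S : Sig) : Sys S × Conf S → Option S.Act → Sys S × Conf S → Prop
  | iAct {s s' : Sys S} {c c' : Conf S} {α : S.Act} :
      ¬ canK S c → SysStep S s (MLab.act α) s' → MStep S c (MLab.act α) c' →
      IStep S (s, c) (some α) (s', c')
  | iTrm {s s' : Sys S} {Γ : Env S} {U : UEnv S} {φ : AFrm S} {α : S.Act} :
      ¬ canK S (Γ, U, φ) → SysStep S s (MLab.act α) s' →
      (¬ ∃ c', MStep S (Γ, U, φ) (MLab.act α) c') →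
      IStep S (s, (Γ, U, φ)) (some α) (s', (Γ, U, AFrm.tt))
  | iAda {s s' : Sys S} {c c' : Conf S} {κ : MLab S} :
      isK S κ → MStep S c κ c' → SysStep S s κ s' →
      IStep S (s, c) none (s', c')
  | iSys {s s' : Sys S} {c : Conf S} :
      SysStep S s MLab.tau s' → IStep S (s, c) none (s', c)
  | iMon {s : Sys S} {c c' : Conf S} :
      MStep S c MLab.tau c' → IStep S (s, c) none (s, c')

/-- Multi-step instrumented transitions. -/
def IMany (S : Sig) : Sys S × Conf S → Sys S × Conf S → Prop :=
  Relation.ReflTransGen (fun x y => ∃ l, IStep S x l y)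

/-! ### Errors, well-formedness, `after` -/

/-- Synchronisation error of a dynamically-typed configuration. -/
def Err (S : Sig) (s : Sys S) (c : Conf S) : Prop :=
  ∃ L : List S.Id, (∀ i ∈ L, (s i).isSome = true) ∧
    (((∃ c', MStep S c (MLab.adS L) c') ∧ ¬ ∃ s', SysStep S s (MLab.adS L) s') ∨
     ((∃ c', MStep S c (MLab.rel L) c') ∧ ¬ ∃ s', SysStep S s (MLab.rel L) s'))

/-- System well-formedness: blocked-linear annotations correspond to blocked actors. -/
def WF (S : Sig) (s : Sys S) (Γ : Env S) : Prop :=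
  ∀ i : S.Id, Γ i = some Ty.lpidb → s i = some true

/-- The (relationally presented) `after` function on value environments. -/
def After (S : Sig) (Γ : Env S) (μ : MLab S) (Γ' : Env S) : Prop :=
  match μ with
  | MLab.blk L =>
      ((∀ i ∈ L, Γ i = some Ty.lpid) ∧ Γ' = updL S Γ L Ty.lpidb) ∨
      ((¬ ∀ i ∈ L, Γ i = some Ty.lpid) ∧ Γ' = Γ)
  | MLab.rel L =>
      ((∀ i ∈ L, Γ i = some Ty.lpidb) ∧ Γ' = updL S Γ L Ty.lpid) ∨
      ((¬ ∀ i ∈ L, Γ i = some Ty.lpidb) ∧ Γ' = Γ)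
  | MLab.act _ => EnvLe S Γ Γ'
  | _ => Γ' = Γ

/-! ### The static type system -/

inductive Types (S : Sig) : FEnv S → Env S → AFrm S → Prop
  | tru {Δ : FEnv S} {Γ : Env S} : Types S Δ Γ AFrm.tt
  | fls {Δ : FEnv S} {Γ : Env S} : Types S Δ Γ AFrm.ff
  | cnd {Δ : FEnv S} {Γ : Env S} {b : S.BExp} {φ ψ : AFrm S} :
      Types S Δ Γ φ → Types S Δ Γ ψ → Types S Δ Γ (AFrm.cond b φ ψ)
  | ncA {Δ : FEnv S} {Γ : Env S} {p : S.Pat} {stk : Finset S.FVar}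
      {L : List S.Id} {φ : AFrm S} :
      Types S Δ (extL S Γ (S.bnd p)) φ →
      Types S Δ Γ (AFrm.rel L AFrm.tt) →
      Types S Δ Γ (AFrm.nec false p stk L φ)
  | ncB {Δ : FEnv S} {Γ : Env S} {p : S.Pat} {stk : Finset S.FVar}
      {L : List S.Id} {φ : AFrm S} :
      Types S Δ (extL S Γ (S.bnd p)) (AFrm.blk [S.subjP p] φ) →
      Types S Δ Γ (AFrm.rel L AFrm.tt) →
      Types S Δ Γ (AFrm.nec true p stk L φ)
  | blk {Δ : FEnv S} {Γ : Env S} {L : List S.Id} {φ : AFrm S} :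
      (∀ i ∈ L, Γ i = some Ty.lpid) →
      Types S Δ (updL S Γ L Ty.lpidb) φ → Types S Δ Γ (AFrm.blk L φ)
  | rel {Δ : FEnv S} {Γ : Env S} {L : List S.Id} {φ : AFrm S} :
      (∀ i ∈ L, Γ i = some Ty.lpidb) →
      Types S Δ (updL S Γ L Ty.lpid) φ → Types S Δ Γ (AFrm.rel L φ)
  | adA {Δ : FEnv S} {Γ : Env S} {Al Rl : List S.Id} {φ : AFrm S} :
      (∀ i ∈ Al, Γ i = some Ty.lpid) →
      Types S Δ Γ (AFrm.rel Rl φ) → Types S Δ Γ (AFrm.adA Al Rl φ)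
  | adS {Δ : FEnv S} {Γ : Env S} {Al Rl : List S.Id} {φ : AFrm S} :
      (∀ i ∈ Al, Γ i = some Ty.lpidb) →
      Types S Δ Γ (AFrm.rel Rl φ) → Types S Δ Γ (AFrm.adS Al Rl φ)
  | cn1 {Δ : FEnv S} {Γ Γ₁ Γ₂ : Env S} {φ ψ : AFrm S} :
      excl S φ ψ = none → Split S Γ Γ₁ Γ₂ →
      Types S Δ Γ₁ φ → Types S Δ Γ₂ ψ → Types S Δ Γ (AFrm.conj φ ψ)
  | cn2 {Δ : FEnv S} {Γ : Env S} {φ ψ : AFrm S} {Lφ Lψ : List S.Id} :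
      excl S φ ψ = some (Lφ, Lψ) →
      Types S Δ (eff S Γ Lψ) φ → Types S Δ (eff S Γ Lφ) ψ →
      Types S Δ Γ (AFrm.conj φ ψ)
  | fix {Δ : FEnv S} {Γ : Env S} {X : S.FVar} {φ : AFrm S} :
      Types S (updF S Δ X Γ) Γ φ → Types S Δ Γ (AFrm.max X φ)
  | var {Δ : FEnv S} {Γ Γ₀ : Env S} {X : S.FVar} :
      Δ X = some Γ₀ → EnvLe S Γ₀ Γ → Types S Δ Γ (AFrm.fvar X)
  | clr {Δ : FEnv S} {Γ : Env S} {X : S.FVar} {φ : AFrm S} :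
      Types S Δ Γ φ → Types S Δ Γ (AFrm.clr X φ)


/-!
Induction on the formula transition. Violation is closed under prefixing silent steps of the
system, because only a necessity consumes an action and a weak transition absorbs leading
τ-steps; this settles every τ-transition of the formula. Structurally equivalent formulas have
the same violations, which settles the structural rule, and `tt` is never violated, which makes
the `tt`-idempotence and pattern-mismatch cases vacuous.
-/

theorem TauStar.trans_weakTr {A Act : Type} {R : A → Option Act → A → Prop} {a b c : A}
    {μ : Option Act} (hab : TauStar R a b) (hbc : WeakTr R b μ c) :
    WeakTr R a μ c := by
  cases μ with
  | none => exact hab.trans hbc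
  | some α =>
    obtain ⟨x, y, hbx, hxy, hyc⟩ := hbc
    exact ⟨x, y, hab.trans hbx, hxy, hyc⟩

section Violation

variable {S : Sig} {A : Type} {R : A → Option S.Act → A → Prop}

theorem Viol.not_tt {a : A} {t : List S.Act} : ¬ Viol S R a t .tt := nofun

theorem Viol.conj_iff {a : A} {t : List S.Act} {φ ψ : HML S} :
    Viol S R a t (.conj φ ψ) ↔ Viol S R a t φ ∨ Viol S R a t ψ := by
  constructor
  · rintro (_ | _ | _ | h | h)
    exacts [.inl h, .inr h]
  · rintro (h | h)
    exacts [.cnL h, .cnR h]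

theorem Viol.of_tauStar {a b : A} {t : List S.Act} {φ : HML S}
    (hab : TauStar R a b) (h : Viol S R b t φ) : Viol S R a t φ := by
  induction h generalizing a with
  | ff => exact .ff _ _
  | ifT hb _ ih => exact .ifT hb (ih hab)
  | ifF hb _ ih => exact .ifF hb (ih hab)
  | cnL _ ih => exact .cnL (ih hab)
  | cnR _ ih => exact .cnR (ih hab)
  | nec hw hm hv _ => exact .nec (hab.trans_weakTr hw) hm hv
  | unfold _ ih => exact .unfold (ih hab)

theorem Viol.iff_of_hEquiv {φ ψ : HML S} (h : HEquiv S φ ψ) (a : A) (t : List S.Act) :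
    Viol S R a t φ ↔ Viol S R a t ψ := by
  induction h with
  | refl => rfl
  | symm _ ih => exact ih.symm
  | trans _ _ ih₁ ih₂ => exact ih₁.trans ih₂
  | comm => simp only [Viol.conj_iff, or_comm]
  | assoc => simp only [Viol.conj_iff, or_assoc]
  | unit => simp only [Viol.conj_iff, Viol.not_tt, false_or]
  | absorb => exact ⟨fun _ => .ff _ _, fun _ => .cnL (.ff _ _)⟩
  | congc _ _ ih₁ ih₂ => simp only [Viol.conj_iff, ih₁, ih₂]

theorem Viol.of_hStep_of_weakTr {φ φ' : HML S} {μ : Option S.Act} {a a' : A}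
    {t : List S.Act} (hstep : HStep S φ μ φ') (hweak : WeakTr R a μ a')
    (hviol : Viol S R a' t φ') : Viol S R a (consOpt μ t) φ := by
  induction hstep generalizing a a' t with
  | idem1 => exact .ff _ _
  | idem2 | nc2 => exact absurd hviol Viol.not_tt
  | ifT hb => exact .ifT hb (hviol.of_tauStar hweak)
  | ifF hb => exact .ifF hb (hviol.of_tauStar hweak)
  | unfold => exact .unfold (hviol.of_tauStar hweak)
  | nc1 hm => exact .nec hweak hm hviol
  | cn1 _ _ ih₁ ih₂ =>
    rcases Viol.conj_iff.mp hviol with h | h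
    exacts [.cnL (ih₁ hweak h), .cnR (ih₂ hweak h)]
  | cn2 _ ih =>
    rcases Viol.conj_iff.mp hviol with h | h
    exacts [.cnL (ih hweak h), .cnR (h.of_tauStar hweak)]
  | cn3 _ ih =>
    rcases Viol.conj_iff.mp hviol with h | h
    exacts [.cnL (h.of_tauStar hweak), .cnR (ih hweak h)]
  | str he₁ _ he₂ ih =>
    exact (Viol.iff_of_hEquiv he₁ a _).mpr (ih hweak ((Viol.iff_of_hEquiv he₂ a' t).mpr hviol))

end Violation

theorem statement1_general (S : Sig) {A : Type} (R : A → Option S.Act → A → Prop)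
    (φ φ' : HML S) (μ : Option S.Act) (a a' : A) (t : List S.Act)
    (hstep : HStep S φ μ φ')
    (hviol : Viol S R a' t φ')
    (hweak : WeakTr R a μ a') :
    Viol S R a (consOpt μ t) φ :=
  Viol.of_hStep_of_weakTr hstep hweak hviol

/-- if a closed sHML formula `φ` makes a (possibly silent)
transition to `φ'`, the actor system weakly performs the same action to become
`a'`, and `a'` violates `φ'` with trace `t`, then `a` violates `φ` with trace
`μt` (the trace `t` prefixed by the action when visible). -/
theorem statement1 (S : Sig) {A : Type} (R : A → Option S.Act → A → Prop)
    (φ φ' : HML S) (μ : Option S.Act) (a a' : A) (t : List S.Act)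
    (hclosed : hfv S φ = ∅)
    (hstep : HStep S φ μ φ')
    (hviol : Viol S R a' t φ')
    (hweak : WeakTr R a μ a') :
    Viol S R a (consOpt μ t) φ :=
  statement1_general S R φ φ' μ a a' t hstep hviol hweak

end RA
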